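/- arXiv:0908.0660 — 3 statements merged into one kernel-verified Lean document; each statement's English description precedes it below -/
import Mathlib

section
/- Let Φ ∈ ℝ^{m×n}, let T ⊆ {1,…,n} with #T = s, and let k ≥ 1. Assume Φ satisfies the RIP of order s+2k with radius δ_{s+2k} ∈ (0,1) and the RIP of order 2k with radius δ_{2k} ∈ (0,1), and that δ_{2k}² + 2δ_{s+2k} < 1. Let x ∈ ℝⁿ, ε ≥ 0, and y = Φx + n with ‖n‖₂ ≤ ε, and let x* solve iBPDN. Set r = x − x_T, let T₀ be a set of k largest-magnitude entries of r, and let μ = √(δ_{s+2k}² + δ_{2k}²). Then ‖x − x*‖₂ ≤ C·ε + D·k^{−1/2}‖r − r_{T₀}‖₁, where C = 4√(1+δ_{s+2k})/(1 − δ_{s+2k} − μ) and D = 2(1 + μ − δ_{s+2k})/(1 − δ_{s+2k} − μ). (Note that δ_{2k}² + 2δ_{s+2k} < 1 guarantees 1 − δ_{s+2k} − μ > 0.) -/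
/-!
Put `h = x* - x`. Feasibility of `x` and optimality of `x*` on `Tᶜ` give `‖Φh‖₂ ≤ 2ε` and the
cone condition `‖h_A‖₁ ≤ ‖h_{T₀}‖₁ + 2‖x_A‖₁` on `A = (T ∪ T₀)ᶜ`. Let `T₁` be the `k` largest
entries of `h` on `A`, and cut the rest of `A` into blocks of at most `k` entries of decreasing
magnitude, so that the ℓ₂ norms of the blocks add up to at most `‖h_A‖₁ / √k`. For
`g = h_{T ∪ T₀ ∪ T₁}` the RIP gives `(1 - δ_{s+2k}) ‖g‖² ≤ ‖Φg‖² = ⟨Φg, Φh⟩ - Σ_B ⟨Φg, Φh_B⟩`;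
restricted orthogonality, applied to the part of `g` on `T ∪ T₀` (order `s + 2k`) and to the part
on `T₁` (order `2k`) separately, bounds each `|⟨Φg, Φh_B⟩|` by `μ ‖g‖ ‖h_B‖`. This is a
quadratic inequality for `‖g‖`; the tail `h - g` is controlled by the block sum.
-/

open scoped BigOperators

/-- The Euclidean (ℓ₂) norm of a vector. -/
noncomputable def l2 {d : ℕ} (u : Fin d → ℝ) : ℝ := Real.sqrt (∑ i, (u i) ^ 2)

/-- The ℓ₁ norm of a vector. -/
noncomputable def l1 {d : ℕ} (u : Fin d → ℝ) : ℝ := ∑ i, |u i|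

/-- `restr S u` equals `u` on `S` and `0` outside `S`. -/
def restr {n : ℕ} (S : Finset (Fin n)) (u : Fin n → ℝ) : Fin n → ℝ :=
  fun i => if i ∈ S then u i else 0

/-- Restricted Isometry Property of order `q` with radius `δ`. -/
def RIP {m n : ℕ} (Φ : Matrix (Fin m) (Fin n) ℝ) (q : ℕ) (δ : ℝ) : Prop :=
  ∀ u : Fin n → ℝ, (Function.support u).ncard ≤ q →
    (1 - δ) * (l2 u) ^ 2 ≤ (l2 (Φ.mulVec u)) ^ 2 ∧
    (l2 (Φ.mulVec u)) ^ 2 ≤ (1 + δ) * (l2 u) ^ 2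

/-- `xs` solves the innovative Basis Pursuit DeNoise program. -/
def solvesIBPDN {m n : ℕ} (Φ : Matrix (Fin m) (Fin n) ℝ) (y : Fin m → ℝ) (ε : ℝ)
    (T : Finset (Fin n)) (xs : Fin n → ℝ) : Prop :=
  l2 (y - Φ.mulVec xs) ≤ ε ∧
  ∀ u : Fin n → ℝ, l2 (y - Φ.mulVec u) ≤ ε → l1 (restr Tᶜ xs) ≤ l1 (restr Tᶜ u)

/-- `S` is a set of largest-magnitude entries of `r`. -/
def isLargest {n : ℕ} (r : Fin n → ℝ) (S : Finset (Fin n)) : Prop :=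
  ∀ i ∈ S, ∀ j ∉ S, |r j| ≤ |r i|

open Matrix Finset

section Norms

variable {d : ℕ}

lemma l2_eq_norm (u : Fin d → ℝ) : l2 u = ‖WithLp.toLp 2 u‖ := by
  simp [l2, EuclideanSpace.norm_eq]

lemma dotProduct_eq_inner (u v : Fin d → ℝ) :
    u ⬝ᵥ v = inner ℝ (WithLp.toLp 2 u) (WithLp.toLp 2 v) := by
  simp [EuclideanSpace.inner_eq_star_dotProduct, dotProduct_comm]

lemma l2_nonneg (u : Fin d → ℝ) : 0 ≤ l2 u := Real.sqrt_nonneg _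

lemma l1_nonneg (u : Fin d → ℝ) : 0 ≤ l1 u := sum_nonneg fun _ _ => abs_nonneg _

lemma l2_eq_zero {u : Fin d → ℝ} : l2 u = 0 ↔ u = 0 := by
  simp [l2_eq_norm]

lemma l2_smul (c : ℝ) (u : Fin d → ℝ) : l2 (c • u) = |c| * l2 u := by
  simp [l2_eq_norm, WithLp.toLp_smul, norm_smul]

lemma l2_add_le (u v : Fin d → ℝ) : l2 (u + v) ≤ l2 u + l2 v := by
  simpa only [l2_eq_norm, WithLp.toLp_add] using norm_add_le _ _

lemma l2_sub_le (u v : Fin d → ℝ) : l2 (u - v) ≤ l2 u + l2 v := by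
  simpa only [l2_eq_norm, WithLp.toLp_sub] using norm_sub_le _ _

lemma l2_sub_comm (u v : Fin d → ℝ) : l2 (u - v) = l2 (v - u) := by
  simp only [l2_eq_norm, WithLp.toLp_sub, norm_sub_rev]

lemma l2_sum_le {ι : Type*} (s : Finset ι) (f : ι → Fin d → ℝ) :
    l2 (∑ j ∈ s, f j) ≤ ∑ j ∈ s, l2 (f j) := by
  simpa only [l2_eq_norm, WithLp.toLp_sum] using norm_sum_le s _

lemma abs_dotProduct_le (u v : Fin d → ℝ) : |u ⬝ᵥ v| ≤ l2 u * l2 v := by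
  simpa only [dotProduct_eq_inner, l2_eq_norm] using abs_real_inner_le_norm _ _

lemma l2_sq_eq_dotProduct (u : Fin d → ℝ) : l2 u ^ 2 = u ⬝ᵥ u := by
  rw [dotProduct_eq_inner, real_inner_self_eq_norm_sq, l2_eq_norm]

lemma l2_add_sq (u v : Fin d → ℝ) : l2 (u + v) ^ 2 = l2 u ^ 2 + 2 * (u ⬝ᵥ v) + l2 v ^ 2 := by
  simpa only [dotProduct_eq_inner, l2_eq_norm, WithLp.toLp_add] using norm_add_sq_real _ _

lemma l2_sub_sq (u v : Fin d → ℝ) : l2 (u - v) ^ 2 = l2 u ^ 2 - 2 * (u ⬝ᵥ v) + l2 v ^ 2 := by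
  simpa only [dotProduct_eq_inner, l2_eq_norm, WithLp.toLp_sub] using norm_sub_sq_real _ _

end Norms

section Restriction

variable {n : ℕ}

lemma restr_union {S S' : Finset (Fin n)} (h : Disjoint S S') (u : Fin n → ℝ) :
    restr (S ∪ S') u = restr S u + restr S' u := by
  ext i
  by_cases hS : i ∈ S
  · simp [restr, hS, disjoint_left.mp h hS]
  · simp [restr, hS]

lemma restr_add_restr_compl (S : Finset (Fin n)) (u : Fin n → ℝ) :
    restr S u + restr Sᶜ u = u := by
  ext i; by_cases hS : i ∈ S <;> simp [restr, hS]

lemma restr_sdiff {B A : Finset (Fin n)} (h : B ⊆ A) (u : Fin n → ℝ) :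
    restr A u = restr B u + restr (A \ B) u := by
  rw [← restr_union disjoint_sdiff, union_sdiff_of_subset h]

lemma support_restr_subset (S : Finset (Fin n)) (u : Fin n → ℝ) :
    Function.support (restr S u) ⊆ S := by
  intro i hi
  by_contra hS
  exact hi (if_neg hS)

lemma l1_restr (S : Finset (Fin n)) (u : Fin n → ℝ) : l1 (restr S u) = ∑ i ∈ S, |u i| := by
  simp [l1, restr, apply_ite, sum_ite_mem]

lemma l2_restr_sq (S : Finset (Fin n)) (u : Fin n → ℝ) :
    l2 (restr S u) ^ 2 = ∑ i ∈ S, u i ^ 2 := by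
  rw [l2, Real.sq_sqrt (sum_nonneg fun i _ => sq_nonneg _)]
  simp [restr, ite_pow, sum_ite_mem]

lemma l2_restr_mono {S S' : Finset (Fin n)} (h : S' ⊆ S) (u : Fin n → ℝ) :
    l2 (restr S' u) ≤ l2 (restr S u) := by
  refine le_of_pow_le_pow_left₀ two_ne_zero (l2_nonneg _) ?_
  rw [l2_restr_sq, l2_restr_sq]
  exact sum_le_sum_of_subset_of_nonneg h fun i _ _ => sq_nonneg _

lemma l1_restr_le_sqrt_card_mul_l2 (S : Finset (Fin n)) (u : Fin n → ℝ) :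
    l1 (restr S u) ≤ √S.card * l2 (restr S u) := by
  have hcs := sum_mul_sq_le_sq_mul_sq S (fun _ => (1 : ℝ)) (fun i => |u i|)
  simp only [one_mul, one_pow, sum_const, nsmul_eq_mul, mul_one, sq_abs] at hcs
  rw [l1_restr, ← Real.sqrt_sq (l2_nonneg _), ← Real.sqrt_mul (Nat.cast_nonneg _), l2_restr_sq]
  exact (le_abs_self _).trans (Real.abs_le_sqrt hcs)

end Restriction

section RestrictedIsometry

variable {m n q : ℕ} {Φ : Matrix (Fin m) (Fin n) ℝ} {δ : ℝ}

lemma ncard_support_le_card {u : Fin n → ℝ} {P : Finset (Fin n)}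
    (h : Function.support u ⊆ P) : (Function.support u).ncard ≤ P.card := by
  simpa using Set.ncard_le_ncard h P.finite_toSet

lemma dotProduct_eq_zero_of_disjoint {P Q : Finset (Fin n)} (hPQ : Disjoint P Q)
    {u v : Fin n → ℝ} (hu : Function.support u ⊆ P) (hv : Function.support v ⊆ Q) :
    u ⬝ᵥ v = 0 := by
  refine sum_eq_zero fun i _ => ?_
  by_cases hi : u i = 0
  · simp [hi]
  · have : v i = 0 := Function.notMem_support.mp fun hvi => disjoint_left.mp hPQ (hu hi) (hv hvi)
    simp [this]

lemma RIP.l2_mulVec_le (hΦ : RIP Φ q δ) {u : Fin n → ℝ} (hu : (Function.support u).ncard ≤ q) :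
    l2 (Φ *ᵥ u) ≤ √(1 + δ) * l2 u :=
  calc l2 (Φ *ᵥ u) = √(l2 (Φ *ᵥ u) ^ 2) := (Real.sqrt_sq (l2_nonneg _)).symm
    _ ≤ √((1 + δ) * l2 u ^ 2) := Real.sqrt_le_sqrt (hΦ u hu).2
    _ = √(1 + δ) * l2 u := by rw [Real.sqrt_mul' _ (sq_nonneg _), Real.sqrt_sq (l2_nonneg _)]

lemma RIP.abs_dotProduct_mulVec_le_half (hΦ : RIP Φ q δ) {P Q : Finset (Fin n)}
    (hPQ : Disjoint P Q) (hq : P.card + Q.card ≤ q) {u v : Fin n → ℝ}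
    (hu : Function.support u ⊆ P) (hv : Function.support v ⊆ Q) :
    |Φ *ᵥ u ⬝ᵥ Φ *ᵥ v| ≤ δ / 2 * (l2 u ^ 2 + l2 v ^ 2) := by
  have hsupp : Function.support u ∪ Function.support v ⊆ ↑(P ∪ Q) := by
    rw [coe_union]; exact Set.union_subset_union hu hv
  have hcard : (P ∪ Q).card ≤ q := (card_union_le P Q).trans hq
  have huv := dotProduct_eq_zero_of_disjoint hPQ hu hv
  have hadd := hΦ (u + v)
    ((ncard_support_le_card ((Function.support_add u v).trans hsupp)).trans hcard)
  have hsub := hΦ (u - v)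
    ((ncard_support_le_card ((Function.support_sub u v).trans hsupp)).trans hcard)
  rw [mulVec_add, l2_add_sq, l2_add_sq, huv] at hadd
  rw [mulVec_sub, l2_sub_sq, l2_sub_sq, huv] at hsub
  rw [abs_le]
  constructor <;> linarith [hadd.1, hadd.2, hsub.1, hsub.2]

lemma RIP.abs_dotProduct_mulVec_le (hΦ : RIP Φ q δ) {P Q : Finset (Fin n)}
    (hPQ : Disjoint P Q) (hq : P.card + Q.card ≤ q) {u v : Fin n → ℝ}
    (hu : Function.support u ⊆ P) (hv : Function.support v ⊆ Q) :
    |Φ *ᵥ u ⬝ᵥ Φ *ᵥ v| ≤ δ * l2 u * l2 v := by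
  rcases (mul_nonneg (l2_nonneg u) (l2_nonneg v)).eq_or_lt with h0 | hpos
  · rcases mul_eq_zero.mp h0.symm with hu0 | hv0
    · simp [l2_eq_zero.mp hu0, l2]
    · simp [l2_eq_zero.mp hv0, l2]
  -- rescale `u` and `v` to the same norm `l2 u * l2 v` before applying the half-sum bound
  have h := hΦ.abs_dotProduct_mulVec_le_half hPQ hq
    ((Function.support_const_smul_subset (l2 v) u).trans hu)
    ((Function.support_const_smul_subset (l2 u) v).trans hv)
  rw [mulVec_smul, mulVec_smul, smul_dotProduct, dotProduct_smul, smul_eq_mul, smul_eq_mul,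
    l2_smul, l2_smul, abs_of_nonneg (l2_nonneg u), abs_of_nonneg (l2_nonneg v), abs_mul,
    abs_mul, abs_of_nonneg (l2_nonneg u), abs_of_nonneg (l2_nonneg v)] at h
  refine le_of_mul_le_mul_left ?_ hpos
  linarith

end RestrictedIsometry

section Blocks

variable {n : ℕ}

lemma exists_subset_card_eq_forall_abs_le (w : Fin n → ℝ) {A : Finset (Fin n)} {k : ℕ}
    (hk : k ≤ A.card) : ∃ B ⊆ A, B.card = k ∧ ∀ i ∈ B, ∀ j ∈ A \ B, |w j| ≤ |w i| := by
  -- a `k`-subset of maximal ℓ₁ mass: exchanging `i ∈ B` for `j ∉ B` cannot increase the mass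
  obtain ⟨B, hB, hmax⟩ := (powersetCard k A).exists_max_image (fun B => ∑ i ∈ B, |w i|)
    (powersetCard_nonempty.mpr hk)
  obtain ⟨hBA, hBk⟩ := mem_powersetCard.mp hB
  refine ⟨B, hBA, hBk, fun i hi j hj => ?_⟩
  obtain ⟨hjA, hjB⟩ := mem_sdiff.mp hj
  have hj' : j ∉ B.erase i := fun h => hjB (mem_of_mem_erase h)
  have hexch : insert j (B.erase i) ∈ powersetCard k A := by
    refine mem_powersetCard.mpr ⟨insert_subset hjA ((erase_subset i B).trans hBA), ?_⟩
    rw [card_insert_of_notMem hj', card_erase_of_mem hi, hBk]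
    have := card_pos.mpr ⟨i, hi⟩
    omega
  have := hmax _ hexch
  rw [sum_insert hj', sum_erase_eq_sub hi] at this
  linarith

lemma l2_restr_le_l1_restr_div_sqrt {w : Fin n → ℝ} {k : ℕ} (hk : 0 < k) {B T : Finset (Fin n)}
    (hT : T.card = k) (hB : B.card ≤ k) (hle : ∀ i ∈ T, ∀ j ∈ B, |w j| ≤ |w i|) :
    l2 (restr B w) ≤ l1 (restr T w) / √k := by
  have hkpos : (0 : ℝ) < k := Nat.cast_pos.mpr hk
  have hmean : ∀ j ∈ B, |w j| ≤ l1 (restr T w) / k := by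
    intro j hj
    rw [le_div_iff₀ hkpos, l1_restr]
    calc |w j| * k = ∑ _i ∈ T, |w j| := by simp [hT, mul_comm]
      _ ≤ ∑ i ∈ T, |w i| := sum_le_sum fun i hi => hle i hi j hj
  refine le_of_pow_le_pow_left₀ two_ne_zero (div_nonneg (l1_nonneg _) (Real.sqrt_nonneg _)) ?_
  rw [l2_restr_sq, div_pow, Real.sq_sqrt hkpos.le]
  calc ∑ j ∈ B, w j ^ 2 ≤ ∑ _j ∈ B, (l1 (restr T w) / k) ^ 2 :=
        sum_le_sum fun j hj => sq_le_sq' (abs_le.mp (hmean j hj)).1 (abs_le.mp (hmean j hj)).2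
    _ = B.card * (l1 (restr T w) / k) ^ 2 := by simp
    _ ≤ k * (l1 (restr T w) / k) ^ 2 := by gcongr
    _ = l1 (restr T w) ^ 2 / k := by field_simp

lemma exists_block_decomposition (w : Fin n → ℝ) {k : ℕ} (hk : 0 < k) (A : Finset (Fin n)) :
    ∃ T₁ ⊆ A, T₁.card ≤ k ∧ ∃ (N : ℕ) (B : Fin N → Finset (Fin n)),
      (∀ j, B j ⊆ A \ T₁ ∧ (B j).card ≤ k) ∧
      restr (A \ T₁) w = ∑ j, restr (B j) w ∧
      ∑ j, l2 (restr (B j) w) ≤ l1 (restr A w) / √k := by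
  induction A using Finset.strongInduction with
  | H A ih =>
  rcases le_or_gt A.card k with hA | hA
  · refine ⟨A, subset_rfl, hA, 0, Fin.elim0, fun j => j.elim0, ?_, ?_⟩
    · ext i; simp [restr]
    · simpa using div_nonneg (l1_nonneg (restr A w)) (Real.sqrt_nonneg k)
  obtain ⟨T₁, hT₁A, hT₁k, hT₁max⟩ := exists_subset_card_eq_forall_abs_le w hA.le
  have hT₁ne : T₁.Nonempty := card_pos.mp (hT₁k ▸ hk)
  obtain ⟨T₂, hT₂, hT₂k, N, B, hB, hsum, hl2⟩ := ih (A \ T₁) (sdiff_ssubset hT₁A hT₁ne)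
  refine ⟨T₁, hT₁A, hT₁k.le, N + 1, Fin.cons T₂ B, ?_, ?_, ?_⟩
  · exact Fin.cases ⟨hT₂, hT₂k⟩ fun j => ⟨(hB j).1.trans sdiff_subset, (hB j).2⟩
  · rw [Fin.sum_univ_succ, Fin.cons_zero]
    simp only [Fin.cons_succ]
    rw [← hsum, ← restr_sdiff hT₂]
  · rw [Fin.sum_univ_succ, Fin.cons_zero]
    simp only [Fin.cons_succ]
    have hhead : l2 (restr T₂ w) ≤ l1 (restr T₁ w) / √k :=
      l2_restr_le_l1_restr_div_sqrt hk hT₁k hT₂k fun i hi j hj => hT₁max i hi j (hT₂ hj)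
    rw [l1_restr, ← sum_sdiff hT₁A, add_div, ← l1_restr, ← l1_restr, add_comm (_ / _)]
    exact add_le_add hhead hl2

end Blocks

lemma l1_restr_compl_union_sub_le {n : ℕ} {T T₀ : Finset (Fin n)} {x x' : Fin n → ℝ}
    (hle : l1 (restr Tᶜ x') ≤ l1 (restr Tᶜ x)) :
    l1 (restr (T ∪ T₀)ᶜ (x' - x)) ≤ l1 (restr T₀ (x' - x)) + 2 * l1 (restr (T ∪ T₀)ᶜ x) := by
  have hsplit : Tᶜ = (T₀ \ T) ∪ (T ∪ T₀)ᶜ := by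
    ext i; simp only [mem_compl, mem_union, mem_sdiff]; tauto
  have hdisj : Disjoint (T₀ \ T) (T ∪ T₀)ᶜ :=
    disjoint_compl_right.mono_left (sdiff_subset.trans subset_union_right)
  simp only [l1_restr, Pi.sub_apply] at hle ⊢
  rw [hsplit, sum_union hdisj, sum_union hdisj] at hle
  have hon : ∑ i ∈ T₀ \ T, |x i| ≤ ∑ i ∈ T₀ \ T, (|x' i| + |x' i - x i|) :=
    sum_le_sum fun i _ => by
      linarith [abs_sub_abs_le_abs_sub (x i) (x' i), abs_sub_comm (x i) (x' i)]
  have hoff : ∑ i ∈ (T ∪ T₀)ᶜ, |x' i - x i| ≤ ∑ i ∈ (T ∪ T₀)ᶜ, (|x' i| + |x i|) :=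
    sum_le_sum fun i _ => abs_sub _ _
  have hT₀ : ∑ i ∈ T₀ \ T, |x' i - x i| ≤ ∑ i ∈ T₀, |x' i - x i| :=
    sum_le_sum_of_subset_of_nonneg sdiff_subset fun _ _ _ => abs_nonneg _
  rw [sum_add_distrib] at hon hoff
  linarith

lemma mul_add_mul_le_sqrt_mul_sqrt (a b c d : ℝ) :
    a * c + b * d ≤ √(a ^ 2 + b ^ 2) * √(c ^ 2 + d ^ 2) := by
  rw [← Real.sqrt_mul (by positivity)]
  exact (le_abs_self _).trans (Real.abs_le_sqrt (by nlinarith [sq_nonneg (a * d - b * c)]))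

section KeyInequality

variable {m n q₁ q₂ : ℕ} {Φ : Matrix (Fin m) (Fin n) ℝ} {δ₁ δ₂ : ℝ}

lemma abs_dotProduct_mulVec_restr_union_le (h₁ : RIP Φ q₁ δ₁) (h₂ : RIP Φ q₂ δ₂)
    {S T B : Finset (Fin n)} (hST : Disjoint S T) (hB : Disjoint (S ∪ T) B)
    (hq₁ : S.card + B.card ≤ q₁) (hq₂ : T.card + B.card ≤ q₂) (w : Fin n → ℝ) :
    |Φ *ᵥ restr (S ∪ T) w ⬝ᵥ Φ *ᵥ restr B w| ≤
      √(δ₁ ^ 2 + δ₂ ^ 2) * l2 (restr (S ∪ T) w) * l2 (restr B w) := by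
  obtain ⟨hSB, hTB⟩ := disjoint_union_left.mp hB
  have hpyth : l2 (restr (S ∪ T) w) = √(l2 (restr S w) ^ 2 + l2 (restr T w) ^ 2) := by
    rw [← Real.sqrt_sq (l2_nonneg _), l2_restr_sq, l2_restr_sq, l2_restr_sq, sum_union hST]
  rw [hpyth, restr_union hST, mulVec_add, add_dotProduct]
  calc _ ≤ |Φ *ᵥ restr S w ⬝ᵥ Φ *ᵥ restr B w| + |Φ *ᵥ restr T w ⬝ᵥ Φ *ᵥ restr B w| :=
        abs_add_le _ _
    _ ≤ δ₁ * l2 (restr S w) * l2 (restr B w) + δ₂ * l2 (restr T w) * l2 (restr B w) :=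
        add_le_add
          (h₁.abs_dotProduct_mulVec_le hSB hq₁ (support_restr_subset ..) (support_restr_subset ..))
          (h₂.abs_dotProduct_mulVec_le hTB hq₂ (support_restr_subset ..) (support_restr_subset ..))
    _ = (δ₁ * l2 (restr S w) + δ₂ * l2 (restr T w)) * l2 (restr B w) := by ring
    _ ≤ _ := mul_le_mul_of_nonneg_right (mul_add_mul_le_sqrt_mul_sqrt _ _ _ _) (l2_nonneg _)

lemma sq_l2_restr_le_of_blocks (h₁ : RIP Φ q₁ δ₁) (h₂ : RIP Φ q₂ δ₂)
    {S T : Finset (Fin n)} {N : ℕ} {B : Fin N → Finset (Fin n)} (hST : Disjoint S T)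
    (hB : ∀ j, Disjoint (S ∪ T) (B j)) (hq : S.card + T.card ≤ q₁)
    (hq₁ : ∀ j, S.card + (B j).card ≤ q₁) (hq₂ : ∀ j, T.card + (B j).card ≤ q₂)
    {h : Fin n → ℝ} (hh : restr (S ∪ T)ᶜ h = ∑ j, restr (B j) h) :
    (1 - δ₁) * l2 (restr (S ∪ T) h) ^ 2 ≤ l2 (restr (S ∪ T) h) *
      (√(1 + δ₁) * l2 (Φ *ᵥ h) + √(δ₁ ^ 2 + δ₂ ^ 2) * ∑ j, l2 (restr (B j) h)) := by
  set g := restr (S ∪ T) h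
  have hg : (Function.support g).ncard ≤ q₁ :=
    (ncard_support_le_card (support_restr_subset _ _)).trans ((card_union_le S T).trans hq)
  have hsplit : Φ *ᵥ g ⬝ᵥ Φ *ᵥ h = l2 (Φ *ᵥ g) ^ 2 + ∑ j, Φ *ᵥ g ⬝ᵥ Φ *ᵥ restr (B j) h := by
    conv_lhs => rw [← restr_add_restr_compl (S ∪ T) h, hh]
    rw [mulVec_add, dotProduct_add, mulVec_sum, dotProduct_sum, l2_sq_eq_dotProduct]
  have hhead : Φ *ᵥ g ⬝ᵥ Φ *ᵥ h ≤ √(1 + δ₁) * l2 g * l2 (Φ *ᵥ h) :=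
    (le_abs_self _).trans ((abs_dotProduct_le _ _).trans
      (mul_le_mul_of_nonneg_right (h₁.l2_mulVec_le hg) (l2_nonneg _)))
  have htail : |∑ j, Φ *ᵥ g ⬝ᵥ Φ *ᵥ restr (B j) h| ≤
      √(δ₁ ^ 2 + δ₂ ^ 2) * l2 g * ∑ j, l2 (restr (B j) h) := by
    rw [mul_sum]
    exact (abs_sum_le_sum_abs _ _).trans (sum_le_sum fun j _ =>
      abs_dotProduct_mulVec_restr_union_le h₁ h₂ hST (hB j) (hq₁ j) (hq₂ j) h)
  linarith [(h₁ g hg).1, (abs_le.mp htail).1]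

end KeyInequality

lemma sqrt_sq_add_sq_lt_one_sub {δ₁ δ₂ : ℝ} (h : δ₂ ^ 2 + 2 * δ₁ < 1) :
    √(δ₁ ^ 2 + δ₂ ^ 2) < 1 - δ₁ := by
  have hδ₁ : 0 < 1 - δ₁ := by nlinarith [sq_nonneg δ₂]
  rw [Real.sqrt_lt' hδ₁]
  nlinarith

theorem l2_le_of_l1_restr_compl_union_le {m n s k : ℕ} {Φ : Matrix (Fin m) (Fin n) ℝ}
    {δ₁ δ₂ : ℝ} (h₁ : RIP Φ (s + 2 * k) δ₁) (h₂ : RIP Φ (2 * k) δ₂) (hk : 0 < k)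
    (hδ : √(δ₁ ^ 2 + δ₂ ^ 2) ≤ 1 - δ₁) {T T₀ : Finset (Fin n)} (hT : T.card = s)
    (hT₀ : T₀.card = k) {h : Fin n → ℝ} {e : ℝ}
    (hcone : l1 (restr (T ∪ T₀)ᶜ h) ≤ l1 (restr T₀ h) + 2 * e) :
    (1 - δ₁ - √(δ₁ ^ 2 + δ₂ ^ 2)) * l2 h ≤
      2 * (√(1 + δ₁) * l2 (Φ *ᵥ h)) + 2 * (1 + √(δ₁ ^ 2 + δ₂ ^ 2) - δ₁) * (e / √k) := by
  obtain ⟨T₁, hT₁A, hT₁k, N, B, hB, hBsum, hBl2⟩ := exists_block_decomposition h hk (T ∪ T₀)ᶜ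
  have hcompl : (T ∪ T₀ ∪ T₁)ᶜ = (T ∪ T₀)ᶜ \ T₁ := by rw [compl_union, sdiff_eq_inter_compl]
  rw [← hcompl] at hB hBsum
  have hcard : (T ∪ T₀).card ≤ s + k := hT ▸ hT₀ ▸ card_union_le T T₀
  have hquad := sq_l2_restr_le_of_blocks h₁ h₂ (disjoint_compl_right.mono_right hT₁A)
    (fun j => disjoint_compl_right.mono_right (hB j).1) (by omega)
    (fun j => by have := (hB j).2; omega) (fun j => by have := (hB j).2; omega) hBsum
  set μ := √(δ₁ ^ 2 + δ₂ ^ 2)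
  set G := l2 (restr (T ∪ T₀ ∪ T₁) h)
  set Z := ∑ j, l2 (restr (B j) h)
  have hsqrtk : 0 < √(k : ℝ) := Real.sqrt_pos.mpr (Nat.cast_pos.mpr hk)
  have hT₀G : l1 (restr T₀ h) / √k ≤ G := by
    rw [div_le_iff₀ hsqrtk, mul_comm]
    calc l1 (restr T₀ h) ≤ √k * l2 (restr T₀ h) := hT₀ ▸ l1_restr_le_sqrt_card_mul_l2 T₀ h
      _ ≤ √k * G := by gcongr; exact l2_restr_mono (subset_union_right.trans subset_union_left) h
  have hZ : Z ≤ G + 2 * (e / √k) :=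
    calc Z ≤ l1 (restr (T ∪ T₀)ᶜ h) / √k := hBl2
      _ ≤ (l1 (restr T₀ h) + 2 * e) / √k := by gcongr
      _ = l1 (restr T₀ h) / √k + 2 * (e / √k) := by ring
      _ ≤ G + 2 * (e / √k) := by linarith
  have hH : l2 h ≤ G + Z := by
    calc l2 h = l2 (restr (T ∪ T₀ ∪ T₁) h + ∑ j, restr (B j) h) := by
          rw [← hBsum, restr_add_restr_compl]
      _ ≤ G + Z := (l2_add_le _ _).trans (add_le_add le_rfl (l2_sum_le _ _))
  have hμ : 0 ≤ μ := Real.sqrt_nonneg _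
  have hlin : (1 - δ₁) * G ≤ √(1 + δ₁) * l2 (Φ *ᵥ h) + μ * Z := by
    rcases (l2_nonneg _ : 0 ≤ G).eq_or_lt with hG | hG
    · rw [show G = 0 from hG.symm, mul_zero]
      exact add_nonneg (mul_nonneg (Real.sqrt_nonneg _) (l2_nonneg _))
        (mul_nonneg hμ (sum_nonneg fun _ _ => l2_nonneg _))
    · exact le_of_mul_le_mul_left (by linarith) hG
  linarith [mul_le_mul_of_nonneg_left hZ hμ,
    mul_le_mul_of_nonneg_left (hH.trans (add_le_add le_rfl hZ)) (sub_nonneg.mpr hδ)]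

theorem ibpdn_instance_optimality_general
    {m n : ℕ} (Φ : Matrix (Fin m) (Fin n) ℝ)
    (T : Finset (Fin n)) (s k : ℕ) (hs : T.card = s) (hk : 1 ≤ k)
    (δsk δk : ℝ)
    (hRIPsk : RIP Φ (s + 2 * k) δsk) (hRIPk : RIP Φ (2 * k) δk)
    (hcond : δk ^ 2 + 2 * δsk < 1)
    (x : Fin n → ℝ) (ε : ℝ)
    (nse : Fin m → ℝ) (hnse : l2 nse ≤ ε)
    (y : Fin m → ℝ) (hy : y = Φ.mulVec x + nse)
    (xstar : Fin n → ℝ) (hsol : solvesIBPDN Φ y ε T xstar)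
    (r : Fin n → ℝ) (hr : r = x - restr T x)
    (T₀ : Finset (Fin n)) (hT₀card : T₀.card = k)
    (μ : ℝ) (hμ : μ = Real.sqrt (δsk ^ 2 + δk ^ 2)) :
    l2 (x - xstar) ≤
      (4 * Real.sqrt (1 + δsk) / (1 - δsk - μ)) * ε
        + (2 * (1 + μ - δsk) / (1 - δsk - μ)) *
            ((Real.sqrt k)⁻¹ * l1 (r - restr T₀ r)) := by
  subst hμ
  have hγ := sqrt_sq_add_sq_lt_one_sub hcond
  have hfeas : l2 (y - Φ *ᵥ x) ≤ ε := by rwa [hy, add_sub_cancel_left]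
  have hΦh : l2 (Φ *ᵥ (xstar - x)) ≤ 2 * ε := by
    rw [show Φ *ᵥ (xstar - x) = (y - Φ *ᵥ x) - (y - Φ *ᵥ xstar) by rw [mulVec_sub]; abel]
    linarith [l2_sub_le (y - Φ *ᵥ x) (y - Φ *ᵥ xstar), hsol.1]
  have htail : r - restr T₀ r = restr (T ∪ T₀)ᶜ x := by
    ext i
    by_cases hT : i ∈ T <;> by_cases hT₀ : i ∈ T₀ <;> simp [hr, restr, hT, hT₀]
  have hcore := l2_le_of_l1_restr_compl_union_le hRIPsk hRIPk hk hγ.le hs hT₀card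
    (l1_restr_compl_union_sub_le (T₀ := T₀) (hsol.2 x hfeas))
  rw [l2_sub_comm] at hcore
  rw [htail, div_mul_eq_mul_div, div_mul_eq_mul_div, ← add_div, le_div_iff₀ (sub_pos.mpr hγ),
    ← div_eq_inv_mul]
  linarith [mul_le_mul_of_nonneg_left hΦh (Real.sqrt_nonneg (1 + δsk))]

/-- **Theorem 1 (ℓ₂–ℓ₁ instance optimality of iBPDN).** -/
theorem ibpdn_instance_optimality
    {m n : ℕ} (Φ : Matrix (Fin m) (Fin n) ℝ)
    (T : Finset (Fin n)) (s k : ℕ) (hs : T.card = s) (hk : 1 ≤ k)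
    (δsk δk : ℝ) (hδsk : δsk ∈ Set.Ioo (0 : ℝ) 1) (hδk : δk ∈ Set.Ioo (0 : ℝ) 1)
    (hRIPsk : RIP Φ (s + 2 * k) δsk) (hRIPk : RIP Φ (2 * k) δk)
    (hcond : δk ^ 2 + 2 * δsk < 1)
    (x : Fin n → ℝ) (ε : ℝ) (hε : 0 ≤ ε)
    (nse : Fin m → ℝ) (hnse : l2 nse ≤ ε)
    (y : Fin m → ℝ) (hy : y = Φ.mulVec x + nse)
    (xstar : Fin n → ℝ) (hsol : solvesIBPDN Φ y ε T xstar)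
    (r : Fin n → ℝ) (hr : r = x - restr T x)
    (T₀ : Finset (Fin n)) (hT₀card : T₀.card = k) (hT₀ : isLargest r T₀)
    (μ : ℝ) (hμ : μ = Real.sqrt (δsk ^ 2 + δk ^ 2)) :
    l2 (x - xstar) ≤
      (4 * Real.sqrt (1 + δsk) / (1 - δsk - μ)) * ε
        + (2 * (1 + μ - δsk) / (1 - δsk - μ)) *
            ((Real.sqrt k)⁻¹ * l1 (r - restr T₀ r)) :=
  ibpdn_instance_optimality_general Φ T s k hs hk δsk δk hRIPsk hRIPk hcond x ε nse hnse y hy xstar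
    hsol r hr T₀ hT₀card μ hμ
end

section
/- Let Φ ∈ ℝ^{m×n} satisfy the RIP of order l + l' with radius δ ∈ (0,1), and let u, v ∈ ℝⁿ have disjoint supports with #supp u ≤ l and #supp v ≤ l'. Then |⟨Φu, Φv⟩| ≤ δ·‖u‖₂·‖v‖₂. -/
open scoped BigOperators

/-!
Polarization: for orthogonal `x, y` both `x + y` and `x - y` have squared norm `‖x‖² + ‖y‖²`,
so `4 ⟪Φx, Φy⟫ = ‖Φ(x + y)‖² - ‖Φ(x - y)‖²` is at most `2δ (‖x‖² + ‖y‖²)` in absolute value.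
Disjointly supported `u, v` are orthogonal, `u ± v` are `(l + l')`-sparse, and rescaling `u, v` to
the common norm `‖u‖ ‖v‖` turns the bound `δ (‖u‖² + ‖v‖²) / 2` into `δ ‖u‖ ‖v‖`.
-/

open scoped RealInnerProductSpace

def IsNearIsometryOn {E F : Type*} [SeminormedAddCommGroup E] [InnerProductSpace ℝ E]
    [SeminormedAddCommGroup F] [InnerProductSpace ℝ F] (T : E →ₗ[ℝ] F) (δ : ℝ) (s : Set E) :
    Prop :=
  ∀ z ∈ s, (1 - δ) * ‖z‖ ^ 2 ≤ ‖T z‖ ^ 2 ∧ ‖T z‖ ^ 2 ≤ (1 + δ) * ‖z‖ ^ 2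

namespace IsNearIsometryOn

variable {E F : Type*} [SeminormedAddCommGroup E] [InnerProductSpace ℝ E]
  [SeminormedAddCommGroup F] [InnerProductSpace ℝ F] {T : E →ₗ[ℝ] F} {δ : ℝ} {s t : Set E}
  {x y z : E}

theorem mono (hT : IsNearIsometryOn T δ s) (hts : t ⊆ s) : IsNearIsometryOn T δ t :=
  fun z hz => hT z (hts hz)

theorem norm_map_eq_zero (hT : IsNearIsometryOn T δ s) (hz : z ∈ s) (h : ‖z‖ = 0) :
    ‖T z‖ = 0 := by
  have := (hT z hz).2
  rw [h] at this
  nlinarith [norm_nonneg (T z)]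

theorem abs_inner_map_le_of_add_mem_of_sub_mem (hT : IsNearIsometryOn T δ s)
    (hxy : ⟪x, y⟫ = 0) (hadd : x + y ∈ s) (hsub : x - y ∈ s) :
    |⟪T x, T y⟫| ≤ δ * (‖x‖ ^ 2 + ‖y‖ ^ 2) / 2 := by
  obtain ⟨hadd_lower, hadd_upper⟩ := hT _ hadd
  obtain ⟨hsub_lower, hsub_upper⟩ := hT _ hsub
  rw [map_add, norm_add_sq_real (T x), norm_add_sq_real, hxy] at hadd_lower hadd_upper
  rw [map_sub, norm_sub_sq_real (T x), norm_sub_sq_real, hxy] at hsub_lower hsub_upper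
  rw [abs_le]
  constructor <;> linarith

theorem abs_inner_map_le (hT : IsNearIsometryOn T δ (Submodule.span ℝ {x, y}))
    (hxy : ⟪x, y⟫ = 0) : |⟪T x, T y⟫| ≤ δ * ‖x‖ * ‖y‖ := by
  have hmem (a b : ℝ) : a • x + b • y ∈ Submodule.span ℝ {x, y} :=
    Submodule.mem_span_pair.2 ⟨a, b, rfl⟩
  rcases (mul_nonneg (norm_nonneg x) (norm_nonneg y)).eq_or_lt with hr | hr
  · have hTxy : ‖T x‖ * ‖T y‖ = 0 := by
      rcases mul_eq_zero.1 hr.symm with hx | hy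
      · simp [hT.norm_map_eq_zero (Submodule.subset_span (by simp)) hx]
      · simp [hT.norm_map_eq_zero (Submodule.subset_span (by simp)) hy]
    calc |⟪T x, T y⟫| ≤ ‖T x‖ * ‖T y‖ := abs_real_inner_le_norm _ _
      _ = δ * ‖x‖ * ‖y‖ := by rw [hTxy, mul_assoc, ← hr, mul_zero]
  have key := hT.abs_inner_map_le_of_add_mem_of_sub_mem (x := ‖y‖ • x) (y := ‖x‖ • y)
    (by simp [real_inner_smul_left, real_inner_smul_right, hxy]) (hmem _ _)
    (by simpa [sub_eq_add_neg] using hmem ‖y‖ (-‖x‖))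
  rw [map_smul, map_smul, real_inner_smul_left, real_inner_smul_right, norm_smul, norm_smul,
    norm_norm, norm_norm, ← mul_assoc, abs_mul, abs_of_pos (by rwa [mul_comm])] at key
  refine le_of_mul_le_mul_left ?_ (by rwa [mul_comm] : 0 < ‖y‖ * ‖x‖)
  calc ‖y‖ * ‖x‖ * |⟪T x, T y⟫| ≤ δ * ((‖y‖ * ‖x‖) ^ 2 + (‖x‖ * ‖y‖) ^ 2) / 2 := key
    _ = ‖y‖ * ‖x‖ * (δ * ‖x‖ * ‖y‖) := by ring

end IsNearIsometryOn

def sparseVectors (n q : ℕ) : Set (EuclideanSpace ℝ (Fin n)) :=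
  {z | (Function.support z.ofLp).ncard ≤ q}

section Euclidean

variable {n : ℕ}

theorem l2_eq_norm_toLp (u : Fin n → ℝ) : l2 u = ‖WithLp.toLp 2 u‖ := by
  simp [l2, EuclideanSpace.norm_eq]

theorem sum_mul_eq_inner_toLp (u v : Fin n → ℝ) :
    ∑ i, u i * v i = ⟪WithLp.toLp 2 u, WithLp.toLp 2 v⟫ := by
  simp [EuclideanSpace.inner_toLp_toLp, dotProduct, mul_comm]

theorem inner_toLp_eq_zero_of_disjoint_support {u v : Fin n → ℝ}
    (h : Disjoint (Function.support u) (Function.support v)) :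
    ⟪WithLp.toLp 2 u, WithLp.toLp 2 v⟫ = 0 := by
  rw [← sum_mul_eq_inner_toLp]
  refine Finset.sum_eq_zero fun i _ => ?_
  by_cases hu : u i = 0
  · simp [hu]
  · simp [Function.notMem_support.1 (Set.disjoint_left.1 h hu)]

theorem span_toLp_pair_subset_sparseVectors {u v : Fin n → ℝ} {l l' : ℕ}
    (hu : (Function.support u).ncard ≤ l) (hv : (Function.support v).ncard ≤ l') :
    (Submodule.span ℝ {WithLp.toLp 2 u, WithLp.toLp 2 v} : Set (EuclideanSpace ℝ (Fin n))) ⊆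
      sparseVectors n (l + l') := by
  intro _ hz
  obtain ⟨a, b, rfl⟩ := Submodule.mem_span_pair.1 hz
  calc (Function.support (a • u + b • v)).ncard
      ≤ (Function.support u ∪ Function.support v).ncard :=
        Set.ncard_le_ncard ((Function.support_add _ _).trans (Set.union_subset_union
          (Function.support_const_smul_subset a u) (Function.support_const_smul_subset b v)))
    _ ≤ (Function.support u).ncard + (Function.support v).ncard := Set.ncard_union_le _ _
    _ ≤ l + l' := add_le_add hu hv

theorem RIP.isNearIsometryOn_sparseVectors {m q : ℕ} {Φ : Matrix (Fin m) (Fin n) ℝ} {δ : ℝ}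
    (h : RIP Φ q δ) : IsNearIsometryOn (Matrix.toLpLin 2 2 Φ) δ (sparseVectors n q) :=
  fun z hz => by simpa [l2_eq_norm_toLp, Matrix.toLpLin_apply] using h z.ofLp hz

end Euclidean

theorem rip_inner_product_bound_general
    {m n : ℕ} (Φ : Matrix (Fin m) (Fin n) ℝ) (l l' : ℕ) (δ : ℝ)
    (hRIP : RIP Φ (l + l') δ)
    (u v : Fin n → ℝ)
    (hdisj : Disjoint (Function.support u) (Function.support v))
    (hu : (Function.support u).ncard ≤ l) (hv : (Function.support v).ncard ≤ l') :
    |∑ i, Φ.mulVec u i * Φ.mulVec v i| ≤ δ * l2 u * l2 v := by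
  have hT := hRIP.isNearIsometryOn_sparseVectors.mono (span_toLp_pair_subset_sparseVectors hu hv)
  simpa [l2_eq_norm_toLp, sum_mul_eq_inner_toLp, Matrix.toLpLin_toLp] using
    hT.abs_inner_map_le (inner_toLp_eq_zero_of_disjoint_support hdisj)

/-- **Near-orthogonality of images of disjointly supported sparse vectors
under a RIP matrix** (Candès' polarization-identity lemma). -/
theorem rip_inner_product_bound
    {m n : ℕ} (Φ : Matrix (Fin m) (Fin n) ℝ) (l l' : ℕ) (δ : ℝ)
    (hδ : δ ∈ Set.Ioo (0 : ℝ) 1) (hRIP : RIP Φ (l + l') δ)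
    (u v : Fin n → ℝ)
    (hdisj : Disjoint (Function.support u) (Function.support v))
    (hu : (Function.support u).ncard ≤ l) (hv : (Function.support v).ncard ≤ l') :
    |∑ i, Φ.mulVec u i * Φ.mulVec v i| ≤ δ * l2 u * l2 v :=
  rip_inner_product_bound_general Φ l l' δ hRIP u v hdisj hu hv
end

section
/- Let Φ ∈ ℝ^{m×n}, T ⊆ {1,…,n}, x ∈ ℝⁿ, ε ≥ 0, y ∈ ℝᵐ with ‖y − Φx‖₂ ≤ ε, and let x* solve iBPDN. Set h = x* − x and r = x − x_T. Let k ≥ 1, let T₀ ⊆ Tᶜ with #T₀ = k be a set of k largest-magnitude entries of r, let T_{|0} = T ∪ T₀, and let T₁ ⊆ T_{|0}ᶜ with #T₁ = k be a set of k largest-magnitude entries of h_{T_{|0}ᶜ}. Then ‖h_{(T ∪ T₀ ∪ T₁)ᶜ}‖₂ ≤ 2·k^{−1/2}‖r − r_{T₀}‖₁ + ‖h_{T₀}‖₂. -/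
open scoped BigOperators

lemma sum_restr_abs {n : ℕ} (S : Finset (Fin n)) (u : Fin n → ℝ) :
    (∑ i, |restr S u i|) = ∑ i ∈ S, |u i| := by
  simp only [restr, apply_ite abs, abs_zero]
  rw [Finset.sum_ite_mem, Finset.univ_inter]

lemma sum_restr_sq {n : ℕ} (S : Finset (Fin n)) (u : Fin n → ℝ) :
    (∑ i, (restr S u i) ^ 2) = ∑ i ∈ S, (u i) ^ 2 := by
  simp only [restr, apply_ite (· ^ 2), zero_pow (two_ne_zero)]
  rw [Finset.sum_ite_mem, Finset.univ_inter]

/-- **Bound on the ℓ₂ norm of the iBPDN error outside `T ∪ T₀ ∪ T₁`.** -/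
theorem ibpdn_tail_bound
    {m n : ℕ} (Φ : Matrix (Fin m) (Fin n) ℝ) (T : Finset (Fin n))
    (x : Fin n → ℝ) (ε : ℝ) (hε : 0 ≤ ε)
    (y : Fin m → ℝ) (hy : l2 (y - Φ.mulVec x) ≤ ε)
    (xstar : Fin n → ℝ) (hsol : solvesIBPDN Φ y ε T xstar)
    (h : Fin n → ℝ) (hh : h = xstar - x)
    (r : Fin n → ℝ) (hr : r = x - restr T x)
    (k : ℕ) (hk : 1 ≤ k)
    (T₀ : Finset (Fin n)) (hT₀sub : T₀ ⊆ Tᶜ) (hT₀card : T₀.card = k)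
    (hT₀ : isLargest r T₀)
    (T₁ : Finset (Fin n)) (hT₁sub : T₁ ⊆ (T ∪ T₀)ᶜ) (hT₁card : T₁.card = k)
    (hT₁ : isLargest (restr (T ∪ T₀)ᶜ h) T₁) :
    l2 (restr (T ∪ T₀ ∪ T₁)ᶜ h) ≤
      2 * ((Real.sqrt k)⁻¹ * l1 (r - restr T₀ r)) + l2 (restr T₀ h) := by
  classical
  have hk0 : (0:ℝ) < Real.sqrt k := Real.sqrt_pos.2 (by exact_mod_cast hk)
  have hkR : (0:ℝ) < (k:ℝ) := by exact_mod_cast hk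
  set L : ℝ := ∑ i ∈ Tᶜ \ T₀, |h i| with hL
  set R : ℝ := ∑ i ∈ Tᶜ \ T₀, |r i| with hR
  set H0 : ℝ := l2 (restr T₀ h) with hH0
  have hLnn : 0 ≤ L := Finset.sum_nonneg fun i _ => abs_nonneg _
  have hRnn : 0 ≤ R := Finset.sum_nonneg fun i _ => abs_nonneg _
  have hH0nn : 0 ≤ H0 := Real.sqrt_nonneg _
  -- r agrees with x off T, and is 0 on T
  have hrx : ∀ i, i ∉ T → r i = x i := by
    intro i hi; simp [hr, restr, hi]
  have hrT : ∀ i, i ∈ T → r i = 0 := by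
    intro i hi; simp [hr, restr, hi]
  -- l1 (r - restr T₀ r) = R
  have hl1r : l1 (r - restr T₀ r) = R := by
    have : ∀ i, |r i - restr T₀ r i| = if i ∈ Tᶜ \ T₀ then |r i| else 0 := by
      intro i
      by_cases h0 : i ∈ T₀
      · have : i ∉ Tᶜ \ T₀ := fun hc => (Finset.mem_sdiff.1 hc).2 h0
        simp [restr, h0, this]
      · by_cases hT : i ∈ T
        · have : i ∉ Tᶜ \ T₀ := fun hc =>
            (Finset.mem_compl.1 (Finset.mem_sdiff.1 hc).1) hT
          simp [restr, h0, this, hrT i hT]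
        · have : i ∈ Tᶜ \ T₀ := Finset.mem_sdiff.2 ⟨Finset.mem_compl.2 hT, h0⟩
          simp [restr, h0, this]
    simp only [l1, Pi.sub_apply, this]
    rw [Finset.sum_ite_mem, Finset.univ_inter]
  -- cone constraint: L ≤ ∑_{T₀} |h| + 2 R
  have hmin : ∑ i ∈ Tᶜ, |xstar i| ≤ ∑ i ∈ Tᶜ, |x i| := by
    have := hsol.2 x hy
    rw [l1, l1, sum_restr_abs, sum_restr_abs] at this
    exact this
  have hxs : ∀ i, xstar i = x i + h i := by intro i; simp [hh]
  have cone : L ≤ (∑ i ∈ T₀, |h i|) + 2 * R := by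
    have hsplit : ∀ f : Fin n → ℝ,
        ∑ i ∈ Tᶜ, f i = ∑ i ∈ Tᶜ \ T₀, f i + ∑ i ∈ T₀, f i := by
      intro f; rw [Finset.sum_sdiff hT₀sub]
    have h1 : ∑ i ∈ Tᶜ \ T₀, (|h i| - |x i|) ≤ ∑ i ∈ Tᶜ \ T₀, |xstar i| := by
      apply Finset.sum_le_sum; intro i _
      rw [hxs i]; have := abs_sub_abs_le_abs_sub (h i) (-(x i)); simp at this
      calc |h i| - |x i| ≤ |h i - -(x i)| := by
            have := abs_sub_abs_le_abs_sub (h i) (-(x i)); simpa using this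
        _ = |x i + h i| := by ring_nf
    have h2 : ∑ i ∈ T₀, (|x i| - |h i|) ≤ ∑ i ∈ T₀, |xstar i| := by
      apply Finset.sum_le_sum; intro i _
      rw [hxs i]
      calc |x i| - |h i| ≤ |x i - -(h i)| := by
            have := abs_sub_abs_le_abs_sub (x i) (-(h i)); simpa using this
        _ = |x i + h i| := by ring_nf
    have key : ∑ i ∈ Tᶜ \ T₀, (|h i| - |x i|) + ∑ i ∈ T₀, (|x i| - |h i|)
        ≤ ∑ i ∈ Tᶜ \ T₀, |x i| + ∑ i ∈ T₀, |x i| := by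
      calc ∑ i ∈ Tᶜ \ T₀, (|h i| - |x i|) + ∑ i ∈ T₀, (|x i| - |h i|)
          ≤ ∑ i ∈ Tᶜ \ T₀, |xstar i| + ∑ i ∈ T₀, |xstar i| := add_le_add h1 h2
        _ = ∑ i ∈ Tᶜ, |xstar i| := (hsplit _).symm
        _ ≤ ∑ i ∈ Tᶜ, |x i| := hmin
        _ = _ := hsplit _
    have hrx' : R = ∑ i ∈ Tᶜ \ T₀, |x i| := by
      apply Finset.sum_congr rfl; intro i hi
      rw [hrx i (Finset.mem_compl.1 (Finset.mem_sdiff.1 hi).1)]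
    rw [Finset.sum_sub_distrib, Finset.sum_sub_distrib] at key
    rw [hrx']; linarith
  -- Cauchy-Schwarz: ∑_{T₀} |h| ≤ √k * H0
  have cs : (∑ i ∈ T₀, |h i|) ≤ Real.sqrt k * H0 := by
    have hsq : (∑ i ∈ T₀, |h i|) ^ 2 ≤ (k:ℝ) * ∑ i ∈ T₀, (h i) ^ 2 := by
      have := sq_sum_le_card_mul_sum_sq (s := T₀) (f := fun i => |h i|)
      simpa [hT₀card, sq_abs] using this
    have hH0sq : H0 ^ 2 = ∑ i ∈ T₀, (h i) ^ 2 := by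
      rw [hH0, l2, Real.sq_sqrt (Finset.sum_nonneg fun i _ => sq_nonneg _),
        sum_restr_sq]
    have h1 : (∑ i ∈ T₀, |h i|) ≤ Real.sqrt ((k:ℝ) * ∑ i ∈ T₀, (h i) ^ 2) :=
      (Real.le_sqrt (Finset.sum_nonneg fun i _ => abs_nonneg _)
        (le_trans (sq_nonneg _) hsq)).2 hsq
    calc (∑ i ∈ T₀, |h i|) ≤ Real.sqrt ((k:ℝ) * ∑ i ∈ T₀, (h i) ^ 2) := h1
      _ = Real.sqrt k * Real.sqrt (∑ i ∈ T₀, (h i) ^ 2) :=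
        Real.sqrt_mul (by positivity) _
      _ = Real.sqrt k * H0 := by
        rw [hH0, l2, sum_restr_sq]
  -- every entry outside T ∪ T₀ ∪ T₁ is small
  have hT₁sub' : T₁ ⊆ Tᶜ \ T₀ := by
    intro i hi
    have := Finset.mem_compl.1 (hT₁sub hi)
    rw [Finset.mem_union] at this
    exact Finset.mem_sdiff.2 ⟨Finset.mem_compl.2 fun hT => this (Or.inl hT),
      fun h0 => this (Or.inr h0)⟩
  have hsmall : ∀ i ∈ (T ∪ T₀ ∪ T₁)ᶜ, (k:ℝ) * |h i| ≤ L := by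
    intro i hi
    rw [Finset.mem_compl, Finset.mem_union, Finset.mem_union] at hi
    push_neg at hi
    obtain ⟨⟨hiT, hiT0⟩, hiT1⟩ := hi
    have hiC : i ∈ (T ∪ T₀)ᶜ := by
      rw [Finset.mem_compl, Finset.mem_union]; tauto
    have hbound : ∀ j ∈ T₁, |h i| ≤ |h j| := by
      intro j hj
      have hthis := hT₁ j hj i hiT1
      have hjC : j ∈ (T ∪ T₀)ᶜ := hT₁sub hj
      simp only [restr] at hthis
      rwa [if_pos hiC, if_pos hjC] at hthis
    calc (k:ℝ) * |h i| = ∑ _j ∈ T₁, |h i| := by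
          rw [Finset.sum_const, hT₁card, nsmul_eq_mul]
      _ ≤ ∑ j ∈ T₁, |h j| := Finset.sum_le_sum hbound
      _ ≤ L := Finset.sum_le_sum_of_subset_of_nonneg hT₁sub'
          (fun i _ _ => abs_nonneg _)
  -- tail ℓ₂ bound: l2 (restr (T ∪ T₀ ∪ T₁)ᶜ h) ≤ L / √k
  have htail : l2 (restr (T ∪ T₀ ∪ T₁)ᶜ h) ≤ L / Real.sqrt k := by
    have hCsub : (T ∪ T₀ ∪ T₁)ᶜ ⊆ Tᶜ \ T₀ := by
      intro i hi
      rw [Finset.mem_compl, Finset.mem_union, Finset.mem_union] at hi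
      push_neg at hi
      exact Finset.mem_sdiff.2 ⟨Finset.mem_compl.2 hi.1.1, hi.1.2⟩
    have hsum : ∑ i ∈ (T ∪ T₀ ∪ T₁)ᶜ, (h i) ^ 2 ≤ L ^ 2 / k := by
      calc ∑ i ∈ (T ∪ T₀ ∪ T₁)ᶜ, (h i) ^ 2
          ≤ ∑ i ∈ (T ∪ T₀ ∪ T₁)ᶜ, (L / k) * |h i| := by
            apply Finset.sum_le_sum; intro i hi
            have h1 : (k:ℝ) * |h i| ≤ L := hsmall i hi
            have h2 : |h i| ≤ L / k := by
              rw [le_div_iff₀ hkR]; linarith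
            calc (h i) ^ 2 = |h i| * |h i| := by rw [← sq_abs]; ring
              _ ≤ (L / k) * |h i| := mul_le_mul_of_nonneg_right h2 (abs_nonneg _)
        _ = (L / k) * ∑ i ∈ (T ∪ T₀ ∪ T₁)ᶜ, |h i| := by
            rw [Finset.mul_sum]
        _ ≤ (L / k) * L := by
            apply mul_le_mul_of_nonneg_left _ (by positivity)
            exact Finset.sum_le_sum_of_subset_of_nonneg hCsub
              (fun i _ _ => abs_nonneg _)
        _ = L ^ 2 / k := by ring
    have hl2eq : l2 (restr (T ∪ T₀ ∪ T₁)ᶜ h)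
        = Real.sqrt (∑ i ∈ (T ∪ T₀ ∪ T₁)ᶜ, (h i) ^ 2) := by
      rw [l2, sum_restr_sq]
    rw [hl2eq]
    calc Real.sqrt (∑ i ∈ (T ∪ T₀ ∪ T₁)ᶜ, (h i) ^ 2)
        ≤ Real.sqrt (L ^ 2 / k) := Real.sqrt_le_sqrt hsum
      _ = L / Real.sqrt k := by
          rw [Real.sqrt_div (sq_nonneg L), Real.sqrt_sq hLnn]
  -- assemble
  rw [hl1r]
  calc l2 (restr (T ∪ T₀ ∪ T₁)ᶜ h) ≤ L / Real.sqrt k := htail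
    _ ≤ (Real.sqrt k * H0 + 2 * R) / Real.sqrt k := by
        apply (div_le_div_iff_of_pos_right hk0).mpr
        linarith
    _ = 2 * ((Real.sqrt k)⁻¹ * R) + H0 := by
        field_simp; ring
end
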